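/- Let $g:[0,T]\times\mathbb{R}\times\mathscr{P}_2(\mathbb{R})\to\mathbb{R}$ be such that for each $t$ the map $(x,\mu)\mapsto g(t,x,\mu)$ is continuously differentiable in $x$ with derivative $\partial_x g$, and Lions differentiable in $\mu$ with derivative $\partial_\mu g(t,x,\mu,\cdot)$, and suppose there is $L>0$ with $|\partial_x g(t,x,\mu)-\partial_x g(t,\bar x,\bar\mu)| \le L(|x-\bar x| + \mathcal{W}_2(\mu,\bar\mu))$ and $|\partial_\mu g(t,x,\mu,y)-\partial_\mu g(t,\bar x,\bar\mu,\bar y)| \le L(|x-\bar x| + \mathcal{W}_2(\mu,\bar\mu) + |y-\bar y|)$. Then for all $t\in[0,T]$, all $x^1,\dots,x^N,\bar x^1,\dots,\bar x^N\in\mathbb{R}$ and each $i$: $\big| g(t,x^i,\tfrac1N\sum_k\delta_{x^k}) - g(t,\bar x^i,\tfrac1N\sum_k\delta_{\bar x^k}) - \partial_x g(t,\bar x^i,\tfrac1N\sum_k\delta_{\bar x^k})(x^i-\bar x^i) - \tfrac1N\sum_{k=1}^N \partial_\mu g(t,\bar x^i,\tfrac1N\sum_k\delta_{\bar x^k},\bar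 x^k)(x^k-\bar x^k)\big| \le \tfrac{3L}{2}|x^i-\bar x^i|^2 + \tfrac{5L}{2}\cdot\tfrac1N\sum_{k=1}^N |x^k-\bar x^k|^2$. -/

import Mathlib

open MeasureTheory

/-- The 2-Wasserstein distance between two measures on a normed space,
defined via the infimum over couplings. -/
noncomputable def wasserstein2 {E : Type*} [NormedAddCommGroup E] [MeasurableSpace E]
    (μ ν : Measure E) : ℝ :=
  sInf { r : ℝ | ∃ π : Measure (E × E), IsProbabilityMeasure π ∧
    π.map Prod.fst = μ ∧ π.map Prod.snd = ν ∧
    r = Real.sqrt (∫ p, ‖p.1 - p.2‖ ^ 2 ∂π) }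

/-- `μ ∈ 𝒫₂`: a probability measure with finite second moment. -/
def MemP2 {E : Type*} [NormedAddCommGroup E] [MeasurableSpace E] (μ : Measure E) : Prop :=
  IsProbabilityMeasure μ ∧ Integrable (fun x => ‖x‖ ^ 2) μ

/-- The empirical measure of `N` points: mass `1/N` at each point. -/
noncomputable def empiricalMeasure {E : Type*} [MeasurableSpace E] {N : ℕ}
    (x : Fin N → E) : Measure E :=
  (N : ENNReal)⁻¹ • ∑ i, Measure.dirac (x i)

/-!
Along the segment `v s = xb + s • (x - xb)`, the derivative of `v ↦ g t (v i) (empiricalMeasure v)`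
in the direction `x - xb` moves by at most `L s (2 |Δ i|² + 3 M)`, where `Δ = x - xb` and
`M = (1/N) ∑ |Δ k|²`: the state moves by `s |Δ i|`, the atoms by `s |Δ k|`, and pairing the atoms
couples the two empirical measures at `W₂`-cost at most `s √M`. Integrating this over `s ∈ [0, 1]`
bounds the Taylor remainder by `L (|Δ i|² + 3 M / 2)`.
-/

section Empirical

variable {E : Type*} [MeasurableSpace E] {N : ℕ}

theorem isProbabilityMeasure_empiricalMeasure (hN : 0 < N) (x : Fin N → E) :
    IsProbabilityMeasure (empiricalMeasure x) := by
  constructor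
  simp [empiricalMeasure, ENNReal.inv_mul_cancel, hN.ne']

theorem map_empiricalMeasure {F : Type*} [MeasurableSpace F] {f : E → F} (hf : Measurable f)
    (x : Fin N → E) : (empiricalMeasure x).map f = empiricalMeasure (f ∘ x) := by
  simp [empiricalMeasure, Measure.map_smul, Measure.map_finset_sum hf.aemeasurable,
    Measure.map_dirac' hf]

variable [MeasurableSingletonClass E] {G : Type*} [NormedAddCommGroup G]

theorem integrable_empiricalMeasure (f : E → G) (x : Fin N → E) :
    Integrable f (empiricalMeasure x) := by
  rcases N.eq_zero_or_pos with rfl | hN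
  · simp [empiricalMeasure]
  refine Integrable.smul_measure ?_ (by simp [hN.ne'])
  exact integrable_finsetSum_measure.2 fun k _ => integrable_dirac enorm_lt_top

theorem integral_empiricalMeasure [NormedSpace ℝ G] [CompleteSpace G] (f : E → G)
    (x : Fin N → E) :
    ∫ y, f y ∂empiricalMeasure x = (N : ℝ)⁻¹ • ∑ k, f (x k) := by
  rw [empiricalMeasure, integral_smul_measure, integral_finsetSum_measure
    fun k _ => integrable_dirac enorm_lt_top]
  simp [ENNReal.toReal_inv]

end Empirical

section Wasserstein

variable {E : Type*} [NormedAddCommGroup E] [MeasurableSpace E] [MeasurableSingletonClass E]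
  {N : ℕ}

theorem memP2_empiricalMeasure (hN : 0 < N) (x : Fin N → E) : MemP2 (empiricalMeasure x) :=
  ⟨isProbabilityMeasure_empiricalMeasure hN x, integrable_empiricalMeasure _ x⟩

/-- The coupling `(1/N) ∑ δ_(v k, w k)` bounds the distance. -/
theorem wasserstein2_empiricalMeasure_le (hN : 0 < N) (v w : Fin N → E) :
    wasserstein2 (empiricalMeasure v) (empiricalMeasure w)
      ≤ √((1 / N : ℝ) * ∑ k, ‖v k - w k‖ ^ 2) := by
  refine csInf_le ⟨0, ?_⟩ ⟨empiricalMeasure fun k => (v k, w k),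
    isProbabilityMeasure_empiricalMeasure hN _, map_empiricalMeasure measurable_fst _,
    map_empiricalMeasure measurable_snd _, ?_⟩
  · rintro r ⟨π, -, -, -, rfl⟩
    exact Real.sqrt_nonneg _
  · rw [integral_empiricalMeasure, smul_eq_mul, one_div]

end Wasserstein

open Set

section Taylor

variable {G : Type*} [NormedAddCommGroup G] [NormedSpace ℝ G]

/-- Fencing `s ↦ φ s - φ 0 - s • φ' 0` by `s ↦ K s² / 2`. -/
theorem norm_sub_sub_deriv_le_of_norm_deriv_sub_le {φ φ' : ℝ → G} {K : ℝ}
    (hφ : ∀ s ∈ Icc (0 : ℝ) 1, HasDerivAt φ (φ' s) s)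
    (hφ' : ∀ s ∈ Ico (0 : ℝ) 1, ‖φ' s - φ' 0‖ ≤ K * s) :
    ‖φ 1 - φ 0 - φ' 0‖ ≤ K / 2 := by
  have hrem : ∀ s ∈ Icc (0 : ℝ) 1,
      HasDerivAt (fun s => φ s - φ 0 - s • φ' 0) (φ' s - φ' 0) s := fun s hs => by
    simpa using ((hφ s hs).sub_const (φ 0)).fun_sub ((hasDerivAt_id s).smul_const (φ' 0))
  have hfence := image_norm_le_of_norm_deriv_right_le_deriv_boundary
    (B := fun s => K / 2 * s ^ 2) (B' := fun s => K * s)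
    (fun s hs => (hrem s hs).continuousAt.continuousWithinAt)
    (fun s hs => (hrem s (Ico_subset_Icc_self hs)).hasDerivWithinAt) (by simp)
    (fun s => ((hasDerivAt_pow 2 s).const_mul (K / 2)).congr_deriv (by ring))
    hφ' (right_mem_Icc.2 zero_le_one)
  simpa using hfence

variable {E : Type*} [NormedAddCommGroup E] [NormedSpace ℝ E]

theorem norm_sub_sub_fderiv_le_of_norm_fderiv_sub_le {F : E → G} {F' : E → E →L[ℝ] G}
    {a b : E} {K : ℝ}
    (hF : ∀ z ∈ segment ℝ a b, HasFDerivAt F (F' z) z)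
    (hF' : ∀ s ∈ Ico (0 : ℝ) 1, ‖F' (a + s • (b - a)) (b - a) - F' a (b - a)‖ ≤ K * s) :
    ‖F b - F a - F' a (b - a)‖ ≤ K / 2 := by
  have hline : ∀ s : ℝ, HasDerivAt (fun s : ℝ => a + s • (b - a)) (b - a) s := fun s => by
    simpa using ((hasDerivAt_id s).smul_const (b - a)).const_add a
  have := norm_sub_sub_deriv_le_of_norm_deriv_sub_le (φ := fun s => F (a + s • (b - a)))
    (fun s hs => (hF _ (segment_eq_image' ℝ a b ▸ mem_image_of_mem _ hs)).comp_hasDerivAt s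
      (hline s)) (by simpa using hF')
  simpa using this

end Taylor

section LionsDerivative

variable {N : ℕ}

theorem mul_abs_add_mean_mul_abs_le (hN : 0 < N) (a R : ℝ) (h : Fin N → ℝ) :
    (|a| + R) * |a| + (1 / N : ℝ) * ∑ k, (|a| + R + |h k|) * |h k|
      ≤ 2 * a ^ 2 + R ^ 2 + 2 * ((1 / N : ℝ) * ∑ k, h k ^ 2) := by
  have hpoint : ∀ k, (|a| + R + |h k|) * |h k| ≤ (a ^ 2 + R ^ 2) / 2 + 2 * h k ^ 2 := fun k => by
    nlinarith [sq_nonneg (|a| - |h k|), sq_nonneg (R - |h k|), sq_abs a, sq_abs (h k)]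
  have hmean : (1 / N : ℝ) * ∑ k, (|a| + R + |h k|) * |h k|
      ≤ (a ^ 2 + R ^ 2) / 2 + 2 * ((1 / N : ℝ) * ∑ k, h k ^ 2) := by
    have hN' : (N : ℝ) ≠ 0 := by positivity
    calc (1 / N : ℝ) * ∑ k, (|a| + R + |h k|) * |h k|
        ≤ (1 / N : ℝ) * ∑ k, ((a ^ 2 + R ^ 2) / 2 + 2 * h k ^ 2) := by
          gcongr with k; exact hpoint k
      _ = (a ^ 2 + R ^ 2) / 2 + 2 * ((1 / N : ℝ) * ∑ k, h k ^ 2) := by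
          rw [Finset.sum_add_distrib, ← Finset.mul_sum]
          simp only [Finset.sum_const, Finset.card_univ, Fintype.card_fin, nsmul_eq_mul]
          field_simp
  nlinarith [sq_nonneg (|a| - R), sq_abs a]

theorem wasserstein2_empiricalMeasure_add_smul_le (hN : 0 < N) (w h : Fin N → ℝ) {s : ℝ}
    (hs : 0 ≤ s) :
    wasserstein2 (empiricalMeasure (w + s • h)) (empiricalMeasure w)
      ≤ s * √((1 / N : ℝ) * ∑ k, h k ^ 2) := by
  have hmean : (1 / N : ℝ) * ∑ k, ‖(w + s • h) k - w k‖ ^ 2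
      = s ^ 2 * ((1 / N : ℝ) * ∑ k, h k ^ 2) := by
    simp only [Pi.add_apply, Pi.smul_apply, smul_eq_mul, add_sub_cancel_left, Real.norm_eq_abs,
      sq_abs, mul_pow, ← Finset.mul_sum]
    ring
  have hW := wasserstein2_empiricalMeasure_le hN (w + s • h) w
  rwa [hmean, Real.sqrt_mul' _ (by positivity), Real.sqrt_sq hs] at hW

/-- The derivative of `v ↦ g (v i) (empiricalMeasure v)` at `v` in the direction `h`, for
`dx = ∂ₓ g` and `dmu = ∂_μ g`. -/
noncomputable def lionsDirDeriv (dx : ℝ → Measure ℝ → ℝ) (dmu : ℝ → Measure ℝ → ℝ → ℝ)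
    (i : Fin N) (v h : Fin N → ℝ) : ℝ :=
  dx (v i) (empiricalMeasure v) * h i
    + (1 / N : ℝ) * ∑ k, dmu (v i) (empiricalMeasure v) (v k) * h k

variable {dx : ℝ → Measure ℝ → ℝ} {dmu : ℝ → Measure ℝ → ℝ → ℝ}

theorem sum_smul_proj_apply_eq_lionsDirDeriv (i : Fin N) (v h : Fin N → ℝ) :
    (∑ k : Fin N,
        ((if k = i then dx (v i) (empiricalMeasure v) else 0)
            + (1 / N : ℝ) * dmu (v i) (empiricalMeasure v) (v k))
          • (ContinuousLinearMap.proj (R := ℝ) (φ := fun _ : Fin N => ℝ) k)) h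
      = lionsDirDeriv dx dmu i v h := by
  simp [lionsDirDeriv, add_mul, Finset.sum_add_distrib, ite_mul, Finset.mul_sum, mul_assoc]

theorem abs_lionsDirDeriv_add_smul_sub_le (hN : 0 < N) {L : ℝ} (hL : 0 ≤ L)
    (hdx : ∀ (x x' : ℝ) (μ μ' : Measure ℝ), MemP2 μ → MemP2 μ' →
      |dx x μ - dx x' μ'| ≤ L * (|x - x'| + wasserstein2 μ μ'))
    (hdmu : ∀ (x x' y y' : ℝ) (μ μ' : Measure ℝ), MemP2 μ → MemP2 μ' →
      |dmu x μ y - dmu x' μ' y'| ≤ L * (|x - x'| + wasserstein2 μ μ' + |y - y'|))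
    (i : Fin N) (w h : Fin N → ℝ) {s : ℝ} (hs : 0 ≤ s) :
    |lionsDirDeriv dx dmu i (w + s • h) h - lionsDirDeriv dx dmu i w h|
      ≤ L * s * (2 * h i ^ 2 + 3 * ((1 / N : ℝ) * ∑ k, h k ^ 2)) := by
  set v := w + s • h
  set M := (1 / N : ℝ) * ∑ k, h k ^ 2
  have hM : 0 ≤ M := by positivity
  have hdist : ∀ k, |v k - w k| = s * |h k| := fun k => by
    simp [v, abs_mul, abs_of_nonneg hs]
  have hW : wasserstein2 (empiricalMeasure v) (empiricalMeasure w) ≤ s * √M :=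
    wasserstein2_empiricalMeasure_add_smul_le hN w h hs
  have hμv := memP2_empiricalMeasure hN v
  have hμw := memP2_empiricalMeasure hN w
  have hdx' : |dx (v i) (empiricalMeasure v) - dx (w i) (empiricalMeasure w)|
      ≤ L * s * (|h i| + √M) := by
    refine (hdx _ _ _ _ hμv hμw).trans ?_
    rw [hdist]
    nlinarith
  have hdmu' : ∀ k, |dmu (v i) (empiricalMeasure v) (v k) - dmu (w i) (empiricalMeasure w) (w k)|
      ≤ L * s * (|h i| + √M + |h k|) := fun k => by
    refine (hdmu _ _ _ _ _ _ hμv hμw).trans ?_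
    rw [hdist, hdist]
    nlinarith
  calc |lionsDirDeriv dx dmu i v h - lionsDirDeriv dx dmu i w h|
      = |(dx (v i) (empiricalMeasure v) - dx (w i) (empiricalMeasure w)) * h i
          + (1 / N : ℝ) * ∑ k, (dmu (v i) (empiricalMeasure v) (v k)
              - dmu (w i) (empiricalMeasure w) (w k)) * h k| := by
        simp only [lionsDirDeriv, sub_mul, Finset.sum_sub_distrib]
        ring_nf
    _ ≤ |dx (v i) (empiricalMeasure v) - dx (w i) (empiricalMeasure w)| * |h i|
          + (1 / N : ℝ) * ∑ k, |dmu (v i) (empiricalMeasure v) (v k)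
              - dmu (w i) (empiricalMeasure w) (w k)| * |h k| := by
        refine (abs_add_le _ _).trans ?_
        rw [abs_mul, abs_mul, abs_of_nonneg (by positivity : (0 : ℝ) ≤ 1 / N)]
        gcongr
        exact (Finset.abs_sum_le_sum_abs _ _).trans_eq (by simp [abs_mul])
    _ ≤ L * s * (|h i| + √M) * |h i|
          + (1 / N : ℝ) * ∑ k, L * s * (|h i| + √M + |h k|) * |h k| := by
        gcongr with k
        exact hdmu' k
    _ = L * s * ((|h i| + √M) * |h i| + (1 / N : ℝ) * ∑ k, (|h i| + √M + |h k|) * |h k|) := by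
        simp only [mul_assoc, ← Finset.mul_sum]
        ring
    _ ≤ L * s * (2 * h i ^ 2 + √M ^ 2 + 2 * M) :=
        mul_le_mul_of_nonneg_left (mul_abs_add_mean_mul_abs_le hN (h i) (√M) h) (by positivity)
    _ = L * s * (2 * h i ^ 2 + 3 * M) := by
        rw [Real.sq_sqrt hM]
        ring

end LionsDerivative

theorem lions_taylor_bound_general {N : ℕ} (hN : 0 < N) (T L : ℝ) (hL : 0 < L)
    (g : ℝ → ℝ → Measure ℝ → ℝ)
    (dx : ℝ → ℝ → Measure ℝ → ℝ)
    (dmu : ℝ → ℝ → Measure ℝ → ℝ → ℝ)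
    (hderiv : ∀ t ∈ Set.Icc (0 : ℝ) T, ∀ (i : Fin N) (xs : Fin N → ℝ),
      HasFDerivAt (fun v : Fin N → ℝ => g t (v i) (empiricalMeasure v))
        (∑ k : Fin N,
          ((if k = i then dx t (xs i) (empiricalMeasure xs) else 0)
              + (1 / N : ℝ) * dmu t (xs i) (empiricalMeasure xs) (xs k))
            • (ContinuousLinearMap.proj (R := ℝ) (φ := fun _ : Fin N => ℝ) k)) xs)
    (hdx : ∀ t ∈ Set.Icc (0 : ℝ) T, ∀ (x x' : ℝ) (μ μ' : Measure ℝ),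
      MemP2 μ → MemP2 μ' →
      |dx t x μ - dx t x' μ'| ≤ L * (|x - x'| + wasserstein2 μ μ'))
    (hdmu : ∀ t ∈ Set.Icc (0 : ℝ) T, ∀ (x x' y y' : ℝ) (μ μ' : Measure ℝ),
      MemP2 μ → MemP2 μ' →
      |dmu t x μ y - dmu t x' μ' y'|
        ≤ L * (|x - x'| + wasserstein2 μ μ' + |y - y'|)) :
    ∀ t ∈ Set.Icc (0 : ℝ) T, ∀ (x xb : Fin N → ℝ) (i : Fin N),
      |g t (x i) (empiricalMeasure x) - g t (xb i) (empiricalMeasure xb)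
          - dx t (xb i) (empiricalMeasure xb) * (x i - xb i)
          - (1 / N : ℝ) * ∑ k, dmu t (xb i) (empiricalMeasure xb) (xb k) * (x k - xb k)|
        ≤ 3 * L / 2 * (x i - xb i) ^ 2
          + 5 * L / 2 * ((1 / N : ℝ) * ∑ k, (x k - xb k) ^ 2) := by
  intro t ht x xb i
  have hderivAlong : ∀ s : ℝ, 0 ≤ s →
      |lionsDirDeriv (dx t) (dmu t) i (xb + s • (x - xb)) (x - xb)
          - lionsDirDeriv (dx t) (dmu t) i xb (x - xb)|
        ≤ L * (2 * (x i - xb i) ^ 2 + 3 * ((1 / N : ℝ) * ∑ k, (x k - xb k) ^ 2)) * s := by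
    intro s hs
    simpa [mul_right_comm] using
      abs_lionsDirDeriv_add_smul_sub_le hN hL.le (hdx t ht) (hdmu t ht) i xb (x - xb) hs
  have htaylor := norm_sub_sub_fderiv_le_of_norm_fderiv_sub_le
    (F := fun v : Fin N → ℝ => g t (v i) (empiricalMeasure v)) (a := xb) (b := x)
    (fun z _ => hderiv t ht i z) (fun s hs => by
      simpa only [sum_smul_proj_apply_eq_lionsDirDeriv, Real.norm_eq_abs] using hderivAlong s hs.1)
  simp only [sum_smul_proj_apply_eq_lionsDirDeriv, lionsDirDeriv, Pi.sub_apply,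
    Real.norm_eq_abs, ← sub_sub] at htaylor
  refine htaylor.trans ?_
  have hmean : 0 ≤ (1 / N : ℝ) * ∑ k, (x k - xb k) ^ 2 := by positivity
  nlinarith [mul_nonneg hL.le hmean, mul_nonneg hL.le (sq_nonneg (x i - xb i))]

/-- First-order Taylor expansion error bound (Lemma A.3) for functions of
empirical measures, for `g` whose state derivative `dx = ∂ₓg` and Lions
derivative `dμ = ∂_μ g` are Lipschitz uniformly in time.  The differentiability
is expressed through the induced function `v ↦ g t (v i) (empiricalMeasure v)`
on `ℝ^N`, whose partial derivatives are identified with `∂ₓ g` and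
`(1/N) ∂_μ g`. -/
theorem lions_taylor_bound {N : ℕ} (hN : 0 < N) (T L : ℝ) (hT : 0 < T) (hL : 0 < L)
    (g : ℝ → ℝ → Measure ℝ → ℝ)
    (dx : ℝ → ℝ → Measure ℝ → ℝ)
    (dmu : ℝ → ℝ → Measure ℝ → ℝ → ℝ)
    (hderiv : ∀ t ∈ Set.Icc (0 : ℝ) T, ∀ (i : Fin N) (xs : Fin N → ℝ),
      HasFDerivAt (fun v : Fin N → ℝ => g t (v i) (empiricalMeasure v))
        (∑ k : Fin N,
          ((if k = i then dx t (xs i) (empiricalMeasure xs) else 0)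
              + (1 / N : ℝ) * dmu t (xs i) (empiricalMeasure xs) (xs k))
            • (ContinuousLinearMap.proj (R := ℝ) (φ := fun _ : Fin N => ℝ) k)) xs)
    (hdx : ∀ t ∈ Set.Icc (0 : ℝ) T, ∀ (x x' : ℝ) (μ μ' : Measure ℝ),
      MemP2 μ → MemP2 μ' →
      |dx t x μ - dx t x' μ'| ≤ L * (|x - x'| + wasserstein2 μ μ'))
    (hdmu : ∀ t ∈ Set.Icc (0 : ℝ) T, ∀ (x x' y y' : ℝ) (μ μ' : Measure ℝ),
      MemP2 μ → MemP2 μ' →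
      |dmu t x μ y - dmu t x' μ' y'|
        ≤ L * (|x - x'| + wasserstein2 μ μ' + |y - y'|)) :
    ∀ t ∈ Set.Icc (0 : ℝ) T, ∀ (x xb : Fin N → ℝ) (i : Fin N),
      |g t (x i) (empiricalMeasure x) - g t (xb i) (empiricalMeasure xb)
          - dx t (xb i) (empiricalMeasure xb) * (x i - xb i)
          - (1 / N : ℝ) * ∑ k, dmu t (xb i) (empiricalMeasure xb) (xb k) * (x k - xb k)|
        ≤ 3 * L / 2 * (x i - xb i) ^ 2
          + 5 * L / 2 * ((1 / N : ℝ) * ∑ k, (x k - xb k) ^ 2) :=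
  lions_taylor_bound_general hN T L hL g dx dmu hderiv hdx hdmu
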